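/- Let P be the solution of the synaptic CME with initial condition P(N0,0,0)=1 and P(n,o,0)=0 for all other states. Then for every integer 0 ≤ n0 ≤ N0, the lower tail of the marginal P_N is nondecreasing in time: for all 0 ≤ t ≤ t' one has ∑_{n=0}^{n0} P_N(n, t) ≤ ∑_{n=0}^{n0} P_N(n, t'). -/

import Mathlib

open Finset

/-- Right-hand side of the synaptic chemical master equation (CME) for state `(n,o)`
at time `t`.  Terms referring to out-of-range indices are set to zero. -/
noncomputable def cmeRHS (N0 C : ℕ) (κd κe : ℝ) (κa : ℝ → ℝ)
    (P : ℕ → ℕ → ℝ → ℝ) (n o : ℕ) (t : ℝ) : ℝ :=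
  -(κd * (o : ℝ) + κe * ((n : ℝ) - (o : ℝ)) + κa t * ((n : ℝ) - (o : ℝ)) * ((C : ℝ) - (o : ℝ)))
      * P n o t
  + (if o + 1 ≤ C then κd * ((o : ℝ) + 1) * P n (o + 1) t else 0)
  + (if n + 1 ≤ N0 then κe * ((n : ℝ) + 1 - (o : ℝ)) * P (n + 1) o t else 0)
  + (if 1 ≤ o then κa t * ((n : ℝ) - (o : ℝ) + 1) * ((C : ℝ) - (o : ℝ) + 1) * P n (o - 1) t
     else 0)

/-- `P` solves the synaptic CME on `[0,∞)`. -/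
def IsCMESolution (N0 C : ℕ) (κd κe : ℝ) (κa : ℝ → ℝ) (P : ℕ → ℕ → ℝ → ℝ) : Prop :=
  ∀ n, n ≤ N0 → ∀ o, o ≤ C → ∀ t : ℝ, 0 ≤ t →
    HasDerivAt (fun s => P n o s) (cmeRHS N0 C κd κe κa P n o t) t

/-- Marginal distribution of the total number of neurotransmitters:
`P_N(n,t) = ∑_{o=0}^{C} P(n,o,t)`. -/
noncomputable def margN (C : ℕ) (P : ℕ → ℕ → ℝ → ℝ) (n : ℕ) (t : ℝ) : ℝ :=
  ∑ o ∈ Finset.range (C + 1), P n o t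

/-- Marginal distribution of the number of occupied receptors:
`P_O(o,t) = ∑_{n=0}^{N0} P(n,o,t)`. -/
noncomputable def margO (N0 : ℕ) (P : ℕ → ℕ → ℝ → ℝ) (o : ℕ) (t : ℝ) : ℝ :=
  ∑ n ∈ Finset.range (N0 + 1), P n o t

/-- Binomial probability mass function `P_B(k; m, p)`. -/
noncomputable def binPMF (m : ℕ) (p : ℝ) (k : ℕ) : ℝ :=
  (m.choose k : ℝ) * p ^ k * (1 - p) ^ (m - k)

/-- Right-hand side of the CME truncated to the state set `S`: the entry for a state
`(n,o) ∈ S` keeps the full diagonal term but only receives inflow from states in `S`. -/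
noncomputable def truncRHS (N0 C : ℕ) (κd κe : ℝ) (κa : ℝ → ℝ)
    (S : Finset (ℕ × ℕ)) (Q : ℕ → ℕ → ℝ → ℝ) (n o : ℕ) (t : ℝ) : ℝ :=
  -(κd * (o : ℝ) + κe * ((n : ℝ) - (o : ℝ)) + κa t * ((n : ℝ) - (o : ℝ)) * ((C : ℝ) - (o : ℝ)))
      * Q n o t
  + (if o + 1 ≤ C ∧ (n, o + 1) ∈ S then κd * ((o : ℝ) + 1) * Q n (o + 1) t else 0)
  + (if n + 1 ≤ N0 ∧ (n + 1, o) ∈ S then κe * ((n : ℝ) + 1 - (o : ℝ)) * Q (n + 1) o t else 0)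
  + (if 1 ≤ o ∧ (n, o - 1) ∈ S then
      κa t * ((n : ℝ) - (o : ℝ) + 1) * ((C : ℝ) - (o : ℝ) + 1) * Q n (o - 1) t
     else 0)

/-- `Q` is the truncated solution on the state set `S` for `t ≥ tk`, with initial
condition `Q(tk) = P(tk)|_S`. -/
def IsTruncatedSolution (N0 C : ℕ) (κd κe : ℝ) (κa : ℝ → ℝ)
    (S : Finset (ℕ × ℕ)) (tk : ℝ) (P Q : ℕ → ℕ → ℝ → ℝ) : Prop :=
  (∀ p ∈ S, Q p.1 p.2 tk = P p.1 p.2 tk) ∧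
  (∀ p ∈ S, ∀ t : ℝ, tk ≤ t →
    HasDerivAt (fun s => Q p.1 p.2 s) (truncRHS N0 C κd κe κa S Q p.1 p.2 t) t)

/-!
Unphysical states (`n < o`, more bound receptors than transmitters) form a closed block of the
CME: their only physical neighbours feed them at rate zero. Starting from zero, Grönwall keeps
them empty. On the physical states every inflow rate is nonnegative, so the CME is a
quasi-positive linear system and preserves nonnegativity. Summing the CME over `o`, binding and
unbinding telescope away and `P_N` only changes through escape of free transmitters, which moves
mass from level `n + 1` to level `n`; summing over `n ≤ n0` the derivative of the lower tail is
the nonnegative inflow from level `n0 + 1`.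
-/

open Set Filter Topology

theorem HasDerivAt.eventually_lt_of_deriv_pos {f : ℝ → ℝ} {f' x : ℝ} (hf : HasDerivAt f f' x)
    (hf' : 0 < f') : ∀ᶠ t in 𝓝[>] x, f x < f t := by
  have hslope : ∀ᶠ t in 𝓝[>] x, 0 < slope f x t :=
    ((hasDerivAt_iff_tendsto_slope.1 hf).mono_left
      (nhdsWithin_mono _ fun _ ht => ne_of_gt ht)).eventually (eventually_gt_nhds hf')
  filter_upwards [hslope, self_mem_nhdsWithin] with t hpos hxt
  exact (slope_pos_iff_of_le (le_of_lt hxt)).1 hpos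

theorem nonneg_of_hasDerivAt_of_quasipositive {ι : Type*} [Finite ι] {x x' : ι → ℝ → ℝ}
    {K a b : ℝ} (hx : ∀ i, ∀ t ∈ Icc a b, HasDerivAt (x i) (x' i t) t)
    (hquasi : ∀ t ∈ Icc a b, ∀ i, x i t ≤ 0 → (∀ j, x i t ≤ x j t) → K * x i t ≤ x' i t)
    (ha : ∀ i, 0 ≤ x i a) : ∀ t ∈ Icc a b, ∀ i, 0 ≤ x i t := by
  suffices h : ∀ ε > 0, ∀ t ∈ Icc a b, ∀ i, 0 ≤ x i t + ε * Real.exp ((K + 1) * (t - a)) by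
    intro t ht i
    refine le_of_forall_pos_le_add fun δ hδ => ?_
    have hexp := Real.exp_pos ((K + 1) * (t - a))
    simpa [div_mul_cancel₀ _ hexp.ne'] using
      h (δ / Real.exp ((K + 1) * (t - a))) (by positivity) t ht i
  -- Continuous induction: where a perturbed component touches zero, it is the minimal one, so
  -- `hquasi` applies and the perturbation makes its derivative strictly positive.
  intro ε hε
  set e : ℝ → ℝ := fun t => ε * Real.exp ((K + 1) * (t - a))
  have he : ∀ t, HasDerivAt e ((K + 1) * e t) t := fun t => by
    refine ((((hasDerivAt_id t).sub_const a).const_mul (K + 1)).exp.const_mul ε).congr_deriv ?_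
    simp only [e, id]; ring
  have hy : ∀ i, ∀ t ∈ Icc a b, HasDerivAt (fun s => x i s + e s) (x' i t + (K + 1) * e t) t :=
    fun i t ht => (hx i t ht).add (he t)
  let Y : ℝ → ι → ℝ := fun t i => x i t + e t
  have hclosed : IsClosed (Y ⁻¹' Ici 0 ∩ Icc a b) := by
    rw [Set.inter_comm]
    exact ContinuousOn.preimage_isClosed_of_isClosed
      (continuousOn_pi.2 fun i t ht => (hy i t ht).continuousAt.continuousWithinAt)
      isClosed_Icc isClosed_Ici
  have hstart : a ∈ Y ⁻¹' Ici 0 := fun i => by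
    have : 0 < e a := by positivity
    simpa [Y] using add_nonneg (ha i) this.le
  refine fun t ht => (hclosed.Icc_subset_of_forall_mem_nhdsWithin hstart ?_ ht)
  rintro s ⟨hs, hsI⟩
  have hY : ∀ j, 0 ≤ x j s + e s := hs
  have hsI' : s ∈ Icc a b := Ico_subset_Icc_self hsI
  refine eventually_all.2 fun i => ?_
  rcases (hY i).lt_or_eq with hpos | hzero
  · exact ((hy i s hsI').continuousAt.eventually (lt_mem_nhds hpos)).filter_mono
      nhdsWithin_le_nhds |>.mono fun _ h => h.le
  · have hmin : ∀ j, x i s ≤ x j s := fun j => by linarith [hY j]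
    have hes : 0 < e s := by positivity
    have hderiv : 0 < x' i s + (K + 1) * e s := by
      have := hquasi s hsI' i (by linarith) hmin
      rw [show x i s = -e s by linarith] at this
      linarith
    filter_upwards [(hy i s hsI').eventually_lt_of_deriv_pos hderiv] with r hr
    show 0 ≤ x i r + e r
    linarith

lemma sum_range_succ_ite_succ {M : Type*} [AddCommGroup M] (f : ℕ → M) (C : ℕ) :
    ∑ o ∈ range (C + 1), (if o + 1 ≤ C then f (o + 1) else 0) =
      ∑ o ∈ range (C + 1), f o - f 0 := by
  rw [Finset.sum_range_succ, if_neg (by omega), add_zero, Finset.sum_range_succ',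
    add_sub_cancel_right]
  exact Finset.sum_congr rfl fun o ho => if_pos (by have := Finset.mem_range.1 ho; omega)

lemma sum_range_succ_ite_pred {M : Type*} [AddCommGroup M] (f : ℕ → M) (C : ℕ) :
    ∑ o ∈ range (C + 1), (if 1 ≤ o then f (o - 1) else 0) = ∑ o ∈ range (C + 1), f o - f C := by
  rw [Finset.sum_range_succ', if_neg (by omega), add_zero, Finset.sum_range_succ,
    add_sub_cancel_right]
  exact Finset.sum_congr rfl fun o _ => by simp

def cmeRateBound (N0 C : ℕ) (κd κe A : ℝ) : ℝ := (|κd| + |κe| + A) * ((N0 : ℝ) + C + 1) ^ 2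

section CME

variable {N0 C n o : ℕ} {κd κe A t : ℝ} {κa : ℝ → ℝ} {P Q : ℕ → ℕ → ℝ → ℝ}

lemma abs_cmeRates_le (hn : n ≤ N0) (ho : o ≤ C) (hA : |κa t| ≤ A) :
    |κd * o + κe * ((n : ℝ) - o) + κa t * ((n : ℝ) - o) * ((C : ℝ) - o)|
        ≤ cmeRateBound N0 C κd κe A ∧
      |κd * ((o : ℝ) + 1)| ≤ cmeRateBound N0 C κd κe A ∧
      |κe * ((n : ℝ) + 1 - o)| ≤ cmeRateBound N0 C κd κe A ∧
      |κa t * ((n : ℝ) - o + 1) * ((C : ℝ) - o + 1)| ≤ cmeRateBound N0 C κd κe A := by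
  set L : ℝ := (N0 : ℝ) + C + 1
  have hnR : (n : ℝ) ≤ N0 := by exact_mod_cast hn
  have hoR : (o : ℝ) ≤ C := by exact_mod_cast ho
  have h0n : (0 : ℝ) ≤ n := n.cast_nonneg
  have h0o : (0 : ℝ) ≤ o := o.cast_nonneg
  have hL : ∀ z : ℝ, -L ≤ z → z ≤ L → |z| ≤ L := fun z h1 h2 => abs_le.2 ⟨h1, h2⟩
  have hL0 : 0 ≤ L := by positivity
  have hLsq : L ≤ L ^ 2 := by nlinarith
  have hd : ∀ u : ℝ, |u| ≤ L → |κd * u| ≤ |κd| * L ^ 2 := fun u hu => by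
    rw [abs_mul]; exact mul_le_mul_of_nonneg_left (hu.trans hLsq) (abs_nonneg _)
  have he : ∀ v : ℝ, |v| ≤ L → |κe * v| ≤ |κe| * L ^ 2 := fun v hv => by
    rw [abs_mul]; exact mul_le_mul_of_nonneg_left (hv.trans hLsq) (abs_nonneg _)
  have ha : ∀ v w : ℝ, |v| ≤ L → |w| ≤ L → |κa t * v * w| ≤ A * L ^ 2 := fun v w hv hw => by
    rw [abs_mul, abs_mul, sq, ← mul_assoc]
    exact mul_le_mul (mul_le_mul hA hv (abs_nonneg _) ((abs_nonneg _).trans hA)) hw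
      (abs_nonneg _) (mul_nonneg ((abs_nonneg _).trans hA) hL0)
  have hR : |κd| * L ^ 2 + |κe| * L ^ 2 + A * L ^ 2 = cmeRateBound N0 C κd κe A := by
    simp only [cmeRateBound, L]; ring
  have hA0 : 0 ≤ A * L ^ 2 := mul_nonneg ((abs_nonneg _).trans hA) (sq_nonneg _)
  have hd0 := mul_nonneg (abs_nonneg κd) (sq_nonneg L)
  have he0 := mul_nonneg (abs_nonneg κe) (sq_nonneg L)
  refine ⟨?_, ?_, ?_, ?_⟩
  · have := abs_add_three (κd * o) (κe * ((n : ℝ) - o)) (κa t * ((n : ℝ) - o) * ((C : ℝ) - o))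
    linarith [hd o (hL o (by linarith) (by linarith)), he _ (hL ((n : ℝ) - o) (by linarith)
      (by linarith)), ha _ _ (hL ((n : ℝ) - o) (by linarith) (by linarith))
      (hL ((C : ℝ) - o) (by linarith) (by linarith))]
  · linarith [hd _ (hL ((o : ℝ) + 1) (by linarith) (by linarith))]
  · linarith [he _ (hL ((n : ℝ) + 1 - o) (by linarith) (by linarith))]
  · linarith [ha _ _ (hL ((n : ℝ) - o + 1) (by linarith) (by linarith))
      (hL ((C : ℝ) - o + 1) (by linarith) (by linarith))]

lemma abs_cmeRHS_le {m : ℝ} (hn : n ≤ N0) (ho : o ≤ C) (hA : |κa t| ≤ A)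
    (hQ : ∀ n' ≤ N0, ∀ o' ≤ C, |Q n' o' t| ≤ m) :
    |cmeRHS N0 C κd κe κa Q n o t| ≤ 4 * cmeRateBound N0 C κd κe A * m := by
  obtain ⟨hdiag, hκd, hκe, hκa⟩ := abs_cmeRates_le (κd := κd) (κe := κe) hn ho hA
  set R := cmeRateBound N0 C κd κe A
  have hm : 0 ≤ m := (abs_nonneg _).trans (hQ n hn o ho)
  have hterm : ∀ (p : Prop) [Decidable p] (c : ℝ) (y : ℝ), (p → |c| ≤ R ∧ |y| ≤ m) →
      |if p then c * y else 0| ≤ R * m := fun p _ c y h => by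
    have hR : 0 ≤ R := (abs_nonneg _).trans hκd
    split_ifs with hp
    · rw [abs_mul]; exact mul_le_mul (h hp).1 (h hp).2 (abs_nonneg _) hR
    · simpa using mul_nonneg hR hm
  have h1 : |-(κd * o + κe * ((n : ℝ) - o) + κa t * ((n : ℝ) - o) * ((C : ℝ) - o)) * Q n o t|
      ≤ R * m := by
    rw [abs_mul, abs_neg]
    exact mul_le_mul hdiag (hQ n hn o ho) (abs_nonneg _) ((abs_nonneg _).trans hdiag)
  have h2 := hterm (o + 1 ≤ C) _ (Q n (o + 1) t) fun h => ⟨hκd, hQ n hn _ h⟩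
  have h3 := hterm (n + 1 ≤ N0) _ (Q (n + 1) o t) fun h => ⟨hκe, hQ _ h o ho⟩
  have h4 := hterm (1 ≤ o) _ (Q n (o - 1) t) fun _ => ⟨hκa, hQ n hn _ (by omega)⟩
  unfold cmeRHS
  refine (abs_add_le _ _).trans ?_
  linarith [abs_add_three (-(κd * o + κe * ((n : ℝ) - o) + κa t * ((n : ℝ) - o) * ((C : ℝ) - o)) *
    Q n o t) (if o + 1 ≤ C then κd * ((o : ℝ) + 1) * Q n (o + 1) t else 0)
    (if n + 1 ≤ N0 then κe * ((n : ℝ) + 1 - o) * Q (n + 1) o t else 0)]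

lemma mul_le_cmeRHS (hκd : 0 ≤ κd) (hκe : 0 ≤ κe) (hκa : 0 ≤ κa t)
    (hA : κa t ≤ A) (hn : n ≤ N0) (ho : o ≤ C) (hon : o ≤ n) (hQ0 : Q n o t ≤ 0)
    (hQ : ∀ n' ≤ N0, ∀ o' ≤ C, Q n o t ≤ Q n' o' t) :
    3 * cmeRateBound N0 C κd κe A * Q n o t ≤ cmeRHS N0 C κd κe κa Q n o t := by
  obtain ⟨-, hcd, hce, hca⟩ :=
    abs_cmeRates_le (κd := κd) (κe := κe) hn ho ((abs_of_nonneg hκa).trans_le hA)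
  set R := cmeRateBound N0 C κd κe A
  have hnR : (o : ℝ) ≤ n := by exact_mod_cast hon
  have hoR : (o : ℝ) ≤ C := by exact_mod_cast ho
  have h0o : (0 : ℝ) ≤ o := o.cast_nonneg
  have hterm : ∀ (p : Prop) [Decidable p] (c : ℝ) (y : ℝ), (p → 0 ≤ c ∧ |c| ≤ R ∧ Q n o t ≤ y) →
      R * Q n o t ≤ if p then c * y else 0 := fun p _ c y h => by
    have hR : 0 ≤ R := (abs_nonneg _).trans hcd
    split_ifs with hp
    · obtain ⟨hc0, hcR, hy⟩ := h hp
      rw [abs_of_nonneg hc0] at hcR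
      nlinarith
    · nlinarith
  have hdiag : 0 ≤ κd * o + κe * ((n : ℝ) - o) + κa t * ((n : ℝ) - o) * ((C : ℝ) - o) := by
    have := mul_nonneg (mul_nonneg hκa (sub_nonneg.2 hnR)) (sub_nonneg.2 hoR)
    have := mul_nonneg hκe (sub_nonneg.2 hnR)
    have := mul_nonneg hκd h0o
    linarith
  have h1 := mul_nonneg_of_nonpos_of_nonpos (neg_nonpos.2 hdiag) hQ0
  have h2 := hterm (o + 1 ≤ C) _ (Q n (o + 1) t) fun h => ⟨by positivity, hcd, hQ n hn _ h⟩
  have h3 := hterm (n + 1 ≤ N0) _ (Q (n + 1) o t) fun h =>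
    ⟨mul_nonneg hκe (by linarith), hce, hQ _ h o ho⟩
  have h4 := hterm (1 ≤ o) _ (Q n (o - 1) t) fun _ =>
    ⟨mul_nonneg (mul_nonneg hκa (by linarith)) (by linarith), hca, hQ n hn _ (by omega)⟩
  unfold cmeRHS
  linarith

lemma cmeRHS_congr_of_lt (hQ : ∀ n' o', n' < o' → Q n' o' t = P n' o' t) (hno : n < o) :
    cmeRHS N0 C κd κe κa Q n o t = cmeRHS N0 C κd κe κa P n o t := by
  -- the physical neighbours of an unphysical state feed it at rate zero
  have h3 : κe * ((n : ℝ) + 1 - o) * Q (n + 1) o t = κe * ((n : ℝ) + 1 - o) * P (n + 1) o t := by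
    rcases (Nat.succ_le_of_lt hno).lt_or_eq with h | rfl
    · rw [hQ _ _ h]
    · push_cast; ring
  have h4 : κa t * ((n : ℝ) - o + 1) * ((C : ℝ) - o + 1) * Q n (o - 1) t =
      κa t * ((n : ℝ) - o + 1) * ((C : ℝ) - o + 1) * P n (o - 1) t := by
    rcases (Nat.succ_le_of_lt hno).lt_or_eq with h | rfl
    · rw [hQ _ _ (by omega)]
    · push_cast; ring
  simp only [cmeRHS, hQ n o hno, hQ n (o + 1) (by omega), h3, h4]

theorem cme_eq_zero_of_lt (hκa : Continuous κa) (hP : IsCMESolution N0 C κd κe κa P)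
    (h0 : ∀ n o, n < o → P n o 0 = 0) {T : ℝ} (hT : 0 ≤ T) :
    ∀ n ≤ N0, ∀ o ≤ C, n < o → P n o T = 0 := by
  let U := (range (N0 + 1) ×ˢ range (C + 1)).filter fun q => q.1 < q.2
  have hU : ∀ q : ℕ × ℕ, q ∈ U ↔ q.1 ≤ N0 ∧ q.2 ≤ C ∧ q.1 < q.2 := fun q => by
    simp only [U, Finset.mem_filter, Finset.mem_product, Finset.mem_range, and_assoc]; omega
  obtain ⟨A, hA⟩ :=
    (isCompact_Icc (a := 0) (b := T)).exists_bound_of_continuousOn hκa.continuousOn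
  have hA0 : 0 ≤ A := (norm_nonneg _).trans (hA 0 ⟨le_rfl, hT⟩)
  let f : ℝ → U → ℝ := fun t q => P q.1.1 q.1.2 t
  have hf : ∀ t ∈ Icc 0 T, HasDerivAt f (fun q => cmeRHS N0 C κd κe κa P q.1.1 q.1.2 t) t :=
    fun t ht => hasDerivAt_pi.2 fun q => by
      obtain ⟨hn, ho, -⟩ := (hU q).1 q.2
      exact hP _ hn _ ho t ht.1
  have hbound : ∀ t ∈ Ico 0 T, ‖fun q : U => cmeRHS N0 C κd κe κa P q.1.1 q.1.2 t‖ ≤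
      4 * cmeRateBound N0 C κd κe A * ‖f t‖ := by
    intro t ht
    refine pi_norm_le_iff_of_nonneg (by unfold cmeRateBound; positivity) |>.2 fun q => ?_
    obtain ⟨hn, ho, hno⟩ := (hU q).1 q.2
    rw [Real.norm_eq_abs, ← cmeRHS_congr_of_lt (Q := fun n o t => if n < o then P n o t else 0)
      (fun n' o' h => if_pos h) hno]
    refine abs_cmeRHS_le hn ho (by simpa using hA t (Ico_subset_Icc_self ht))
      fun n' hn' o' ho' => ?_
    split_ifs with h
    · exact norm_le_pi_norm (f t) ⟨(n', o'), (hU _).2 ⟨hn', ho', h⟩⟩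
    · simp
  intro n hn o ho hno
  have := eq_zero_of_abs_deriv_le_mul_abs_self_of_eq_zero_right
    (fun t ht => (hf t ht).continuousAt.continuousWithinAt)
    (fun t ht => (hf t (Ico_subset_Icc_self ht)).hasDerivWithinAt)
    (funext fun q => h0 _ _ ((hU q).1 q.2).2.2) hbound T ⟨hT, le_rfl⟩
  exact congrFun this ⟨(n, o), (hU _).2 ⟨hn, ho, hno⟩⟩

theorem cme_nonneg (hκd : 0 ≤ κd) (hκe : 0 ≤ κe)
    (hκa_cont : Continuous κa) (hκa : ∀ t, 0 ≤ κa t)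
    (hP : IsCMESolution N0 C κd κe κa P)
    (hvanish : ∀ t, 0 ≤ t → ∀ n ≤ N0, ∀ o ≤ C, n < o → P n o t = 0)
    (h0 : ∀ n ≤ N0, ∀ o ≤ C, 0 ≤ P n o 0) {T : ℝ} (hT : 0 ≤ T) :
    ∀ n ≤ N0, ∀ o ≤ C, 0 ≤ P n o T := by
  let G := (range (N0 + 1) ×ˢ range (C + 1)).filter fun q => q.2 ≤ q.1
  have hG : ∀ q : ℕ × ℕ, q ∈ G ↔ q.1 ≤ N0 ∧ q.2 ≤ C ∧ q.2 ≤ q.1 := fun q => by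
    simp only [G, Finset.mem_filter, Finset.mem_product, Finset.mem_range, and_assoc]; omega
  obtain ⟨A, hA⟩ := (isCompact_Icc (a := 0) (b := T)).exists_bound_of_continuousOn
    hκa_cont.continuousOn
  have hG_nonneg := nonneg_of_hasDerivAt_of_quasipositive (ι := G) (a := 0) (b := T)
    (x := fun q t => P q.1.1 q.1.2 t) (x' := fun q t => cmeRHS N0 C κd κe κa P q.1.1 q.1.2 t)
    (K := 3 * cmeRateBound N0 C κd κe A)
    (fun q t ht => hP _ ((hG q).1 q.2).1 _ ((hG q).1 q.2).2.1 t ht.1)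
    (fun t ht q hq0 hmin => by
      obtain ⟨hn, ho, hon⟩ := (hG q).1 q.2
      refine mul_le_cmeRHS hκd hκe (hκa t) ((le_abs_self _).trans (by simpa using hA t ht))
        hn ho hon hq0 fun n' hn' o' ho' => ?_
      rcases lt_or_ge n' o' with h | h
      · rw [hvanish t ht.1 n' hn' o' ho' h]; exact hq0
      · exact hmin ⟨(n', o'), (hG _).2 ⟨hn', ho', h⟩⟩)
    (fun q => h0 _ ((hG q).1 q.2).1 _ ((hG q).1 q.2).2.1)
  intro n hn o ho
  rcases lt_or_ge n o with h | h
  · exact (hvanish T hT n hn o ho h).ge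
  · exact hG_nonneg T ⟨hT, le_rfl⟩ ⟨(n, o), (hG _).2 ⟨hn, ho, h⟩⟩

-- Probability flux from level `n` to `n - 1`, by escape of one of the `n - o` free transmitters.
noncomputable def escapeFlux (N0 C : ℕ) (κe : ℝ) (P : ℕ → ℕ → ℝ → ℝ) (n : ℕ) (t : ℝ) : ℝ :=
  if n ≤ N0 then κe * ∑ o ∈ range (C + 1), ((n : ℝ) - o) * P n o t else 0

lemma sum_cmeRHS_eq_escapeFlux_sub (hn : n ≤ N0) :
    ∑ o ∈ range (C + 1), cmeRHS N0 C κd κe κa P n o t =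
      escapeFlux N0 C κe P (n + 1) t - escapeFlux N0 C κe P n t := by
  let bind : ℕ → ℝ := fun o => κd * o * P n o t
  let unbind : ℕ → ℝ := fun o => κa t * ((n : ℝ) - o) * ((C : ℝ) - o) * P n o t
  have hterm : ∀ o ∈ range (C + 1), cmeRHS N0 C κd κe κa P n o t =
      ((if o + 1 ≤ C then bind (o + 1) else 0) - bind o) +
      ((if 1 ≤ o then unbind (o - 1) else 0) - unbind o) +
      ((if n + 1 ≤ N0 then κe * (((n + 1 : ℕ) : ℝ) - o) * P (n + 1) o t else 0) -
        κe * ((n : ℝ) - o) * P n o t) := fun o _ => by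
    rcases o with _ | o <;>
      simp only [cmeRHS, bind, unbind, add_tsub_cancel_right] <;>
      split_ifs <;> first | omega | (push_cast; ring)
  rw [Finset.sum_congr rfl hterm, Finset.sum_add_distrib, Finset.sum_add_distrib,
    Finset.sum_sub_distrib, Finset.sum_sub_distrib, Finset.sum_sub_distrib,
    sum_range_succ_ite_succ, sum_range_succ_ite_pred, Finset.sum_ite_irrel, Finset.sum_const_zero]
  simp only [escapeFlux, bind, unbind, if_pos hn, Finset.mul_sum, mul_assoc]
  push_cast
  ring

lemma hasDerivAt_sum_margN {n0 : ℕ} (hP : IsCMESolution N0 C κd κe κa P) (hn0 : n0 ≤ N0)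
    (ht : 0 ≤ t) :
    HasDerivAt (fun s => ∑ n ∈ range (n0 + 1), margN C P n s)
      (escapeFlux N0 C κe P (n0 + 1) t - escapeFlux N0 C κe P 0 t) t := by
  rw [← Finset.sum_range_sub (fun n => escapeFlux N0 C κe P n t)]
  refine HasDerivAt.fun_sum fun n hn => ?_
  have hn : n ≤ N0 := (Finset.mem_range_succ_iff.1 hn).trans hn0
  exact (HasDerivAt.fun_sum fun o ho => hP n hn o (Finset.mem_range_succ_iff.1 ho) t ht).congr_deriv
    (sum_cmeRHS_eq_escapeFlux_sub hn)

lemma escapeFlux_nonneg (hκe : 0 ≤ κe)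
    (hP : ∀ n ≤ N0, ∀ o ≤ C, 0 ≤ P n o t)
    (hvanish : ∀ n ≤ N0, ∀ o ≤ C, n < o → P n o t = 0) (n : ℕ) :
    0 ≤ escapeFlux N0 C κe P n t := by
  unfold escapeFlux
  split_ifs with hn
  · refine mul_nonneg hκe (Finset.sum_nonneg fun o ho => ?_)
    have ho : o ≤ C := Finset.mem_range_succ_iff.1 ho
    rcases le_or_gt o n with h | h
    · exact mul_nonneg (sub_nonneg.2 (by exact_mod_cast h)) (hP n hn o ho)
    · simp [hvanish n hn o ho h]
  · exact le_rfl

lemma escapeFlux_zero_nonpos (hκe : 0 ≤ κe)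
    (hP : ∀ o ≤ C, 0 ≤ P 0 o t) : escapeFlux N0 C κe P 0 t ≤ 0 := by
  simp only [escapeFlux, zero_le, if_true, Nat.cast_zero, zero_sub]
  refine mul_nonpos_of_nonneg_of_nonpos hκe (Finset.sum_nonpos fun o ho => ?_)
  exact mul_nonpos_of_nonpos_of_nonneg (neg_nonpos.2 o.cast_nonneg)
    (hP o (Finset.mem_range_succ_iff.1 ho))

end CME

theorem cme_margN_lower_tail_monotone_general
    (N0 C : ℕ) (κd κe : ℝ) (κa : ℝ → ℝ)
    (hκd : 0 ≤ κd) (hκe : 0 ≤ κe)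
    (hκa_cont : Continuous κa) (hκa : ∀ t : ℝ, 0 ≤ κa t)
    (P : ℕ → ℕ → ℝ → ℝ) (hP : IsCMESolution N0 C κd κe κa P)
    (hinit1 : P N0 0 0 = 1)
    (hinit0 : ∀ n o : ℕ, ¬(n = N0 ∧ o = 0) → P n o 0 = 0) :
    ∀ n0 : ℕ, n0 ≤ N0 → ∀ t t' : ℝ, 0 ≤ t → t ≤ t' →
      ∑ n ∈ Finset.range (n0 + 1), margN C P n t ≤
        ∑ n ∈ Finset.range (n0 + 1), margN C P n t' := by
  intro n0 hn0 t t' ht htt'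
  have hvanish : ∀ s, 0 ≤ s → ∀ n ≤ N0, ∀ o ≤ C, n < o → P n o s = 0 := fun s hs =>
    cme_eq_zero_of_lt hκa_cont hP (fun n o hno => hinit0 n o (by omega)) hs
  have hinit : ∀ n ≤ N0, ∀ o ≤ C, 0 ≤ P n o 0 := fun n _ o _ => by
    by_cases h : n = N0 ∧ o = 0
    · rw [h.1, h.2, hinit1]; exact zero_le_one
    · rw [hinit0 n o h]
  have hnonneg : ∀ s, 0 ≤ s → ∀ n ≤ N0, ∀ o ≤ C, 0 ≤ P n o s := fun s hs =>
    cme_nonneg hκd hκe hκa_cont hκa hP hvanish hinit hs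
  have hderiv := fun s (hs : 0 ≤ s) => hasDerivAt_sum_margN hP hn0 hs
  refine monotoneOn_of_hasDerivWithinAt_nonneg (convex_Ici 0)
    (fun s hs => (hderiv s hs).continuousAt.continuousWithinAt)
    (fun s hs => (hderiv s (interior_subset hs)).hasDerivWithinAt)
    (fun s hs => ?_) ht (ht.trans htt') htt'
  have hs : 0 ≤ s := interior_subset hs
  exact sub_nonneg.2 ((escapeFlux_zero_nonpos hκe (hnonneg s hs 0 (Nat.zero_le _))).trans
    (escapeFlux_nonneg hκe (hnonneg s hs) (hvanish s hs) (n0 + 1)))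

/-- For the solution of the synaptic CME started from `(N0, 0)`, the
lower tail of the marginal `P_N` is nondecreasing in time. -/
theorem cme_margN_lower_tail_monotone
    (N0 C : ℕ) (κd κe : ℝ) (κa : ℝ → ℝ)
    (hN0 : 1 ≤ N0) (hC : 1 ≤ C) (hκd : 0 ≤ κd) (hκe : 0 ≤ κe)
    (hκa_cont : Continuous κa) (hκa : ∀ t : ℝ, 0 ≤ κa t)
    (P : ℕ → ℕ → ℝ → ℝ) (hP : IsCMESolution N0 C κd κe κa P)
    (hinit1 : P N0 0 0 = 1)
    (hinit0 : ∀ n o : ℕ, ¬(n = N0 ∧ o = 0) → P n o 0 = 0) :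
    ∀ n0 : ℕ, n0 ≤ N0 → ∀ t t' : ℝ, 0 ≤ t → t ≤ t' →
      ∑ n ∈ Finset.range (n0 + 1), margN C P n t ≤
        ∑ n ∈ Finset.range (n0 + 1), margN C P n t' :=
  cme_margN_lower_tail_monotone_general N0 C κd κe κa hκd hκe hκa_cont hκa P hP hinit1 hinit0
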